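/- Let L, M, N ⊆ [m] with s := |L| + |M| + |N| satisfying 1 ≤ s and (L, M, N) ≠ ([m], [m], [m]). Let C′ be the image of the F_2-linear map (F_2^m)³ → F_2^{E} sending (α,β,γ) to the vector whose coordinate at (d₁,d₂,d₃) ∈ E is α·d₁ + (β+γ)·d₂ + β·d₃, where E = (F_2^m × F_2^m × F_2^m) \ (Δ_L × Δ_M × Δ_N). Then C′ is a binary linear code of length 2^{3m} − 2^s, dimension 3m, and minimum distance 2^{3m−1} − 2^{s−1}; its weight enumerator equals 1 + (2^{3m} − 2^{3m−s})·X^{2^{3m−1} − 2^{s−1}} + (2^{3m−s} − 1)·X^{2^{3m−1}} (so C′ is a 2-weight code); and C′ is a Griesmer code, i.e., Σ_{i=0}^{3m−1} ⌈(2^{3m−1} − 2^{s−1})/2^i⌉ = 2^{3m} − 2^s. -/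

import Mathlib

open Finset Polynomial
open scoped Classical

/-- `V m` is the vector space `F₂^m`. -/
abbrev V (m : ℕ) := Fin m → ZMod 2

/-- Dot product `x·y = Σ_i x_i y_i` in `F₂`. -/
def dot {m : ℕ} (x y : V m) : ZMod 2 := ∑ i, x i * y i

/-- `Supp v = {i : v i ≠ 0}`. -/
def supp {m : ℕ} (v : V m) : Finset (Fin m) := Finset.univ.filter fun i => v i ≠ 0

/-- The simplicial complex `Δ_L = {v : Supp v ⊆ L}` generated by `L`. -/
def Δ {m : ℕ} (L : Finset (Fin m)) : Finset (V m) := Finset.univ.filter fun v => supp v ⊆ L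

/-- Hamming weight of a vector. -/
def wtv {ι : Type} [Fintype ι] (c : ι → ZMod 2) : ℕ :=
  (Finset.univ.filter fun i => c i ≠ 0).card

/-- The linear functional `x ↦ x·y`. -/
noncomputable def dotL {m : ℕ} (y : V m) : V m →ₗ[ZMod 2] ZMod 2 :=
  ∑ i, LinearMap.smulRight (LinearMap.proj i) (y i)

/-- The linear map `(α,β,γ) ↦ ((d₁,d₂,d₃) ↦ α·d₁ + (β+γ)·d₂ + β·d₃)` whose range is the
binary code `C(D₁,D₂,D₃)`. -/
noncomputable def codeMap {m : ℕ} (D₁ D₂ D₃ : Finset (V m)) :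
    (V m × V m × V m) →ₗ[ZMod 2]
      (({x // x ∈ D₁} × {x // x ∈ D₂} × {x // x ∈ D₃}) → ZMod 2) :=
  LinearMap.pi fun d =>
    (dotL d.1.1).comp (LinearMap.fst (ZMod 2) (V m) (V m × V m))
    + (dotL d.2.1.1).comp
        (((LinearMap.fst (ZMod 2) (V m) (V m)).comp (LinearMap.snd (ZMod 2) (V m) (V m × V m)))
          + ((LinearMap.snd (ZMod 2) (V m) (V m)).comp (LinearMap.snd (ZMod 2) (V m) (V m × V m))))
    + (dotL d.2.2.1).comp
        ((LinearMap.fst (ZMod 2) (V m) (V m)).comp (LinearMap.snd (ZMod 2) (V m) (V m × V m)))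

lemma codeMap_apply {m : ℕ} (D₁ D₂ D₃ : Finset (V m)) (α β γ : V m)
    (d : {x // x ∈ D₁} × {x // x ∈ D₂} × {x // x ∈ D₃}) :
    codeMap D₁ D₂ D₃ (α, β, γ) d = dot α d.1.1 + dot (β + γ) d.2.1.1 + dot β d.2.2.1 := by
  simp [codeMap, dotL, dot, LinearMap.smulRight, mul_comm]

/-- The linear map `(α,β,γ) ↦ ((d₁,d₂,d₃) ↦ α·d₁ + (β+γ)·d₂ + β·d₃)` on an arbitrary
index set `E ⊆ F₂^m × F₂^m × F₂^m` of coordinates. -/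
noncomputable def codeMapE {m : ℕ} (E : Finset (V m × V m × V m)) :
    (V m × V m × V m) →ₗ[ZMod 2] ({x // x ∈ E} → ZMod 2) :=
  LinearMap.pi fun d =>
    (dotL d.1.1).comp (LinearMap.fst (ZMod 2) (V m) (V m × V m))
    + (dotL d.1.2.1).comp
        (((LinearMap.fst (ZMod 2) (V m) (V m)).comp (LinearMap.snd (ZMod 2) (V m) (V m × V m)))
          + ((LinearMap.snd (ZMod 2) (V m) (V m)).comp (LinearMap.snd (ZMod 2) (V m) (V m × V m))))
    + (dotL d.1.2.2).comp
        ((LinearMap.fst (ZMod 2) (V m) (V m)).comp (LinearMap.snd (ZMod 2) (V m) (V m × V m)))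

/-! The codeword of `(α, β, γ)` is `d ↦ k · d` with `k = (α, β + γ, β)`, where `·` is the dot
product on `(F₂^m)³`; since `(α, β, γ) ↦ k` is a bijection, the code is parametrised by `k`.
Its weight is the number of points of `(F₂^m)³` outside the subspace `D = Δ_L × Δ_M × Δ_N` at
which the functional `k · _` equals `1`. Translating by a point where it equals `1` shows that
such a functional equals `1` on exactly half of every subspace on which it does not vanish. It
vanishes on `D` exactly when `k` lies in the annihilator `Δ_{Lᶜ} × Δ_{Mᶜ} × Δ_{Nᶜ}`, which has
`2^{3m-s}` elements. So a nonzero `k` has weight `2^{3m-1}` inside the annihilator and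
`2^{3m-1} - 2^{s-1}` outside it, and every claim follows by counting. -/

theorem two_mul_card_filter_eq_one {W : Type*} [AddCommGroup W] (φ : W →+ ZMod 2)
    (S : Finset W) {u : W} (hu : φ u = 1) (hS : ∀ w ∈ S, w + u ∈ S) :
    2 * #{w ∈ S | φ w = 1} = #S := by
  have hshift : ∀ w, φ (w + u) = 1 ↔ φ w ≠ 1 := fun w => by
    rw [map_add, hu]; generalize φ w = x; revert x; decide
  have hinj {T : Set W} : Set.InjOn (· + u) T := fun _ _ _ _ h => add_right_cancel h
  have hle : #{w ∈ S | φ w = 1} ≤ #{w ∈ S | ¬φ w = 1} :=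
    card_le_card_of_injOn (· + u) (fun w hw => by simp_all) hinj
  have hge : #{w ∈ S | ¬φ w = 1} ≤ #{w ∈ S | φ w = 1} :=
    card_le_card_of_injOn (· + u) (fun w hw => by simp_all) hinj
  have := card_filter_add_card_filter_not (s := S) (fun w => φ w = 1)
  omega

theorem card_filter_add_card_filter_compl {α : Type*} [Fintype α] [DecidableEq α] (s : Finset α)
    (p : α → Prop) [DecidablePred p] : #{x ∈ s | p x} + #{x ∈ sᶜ | p x} = #{x | p x} := by
  rw [card_filter, card_filter, card_filter]
  exact sum_add_sum_compl s _

theorem wtv_zero {ι : Type} [Fintype ι] : wtv (0 : ι → ZMod 2) = 0 := by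
  simp [wtv]

section Δ

variable {m : ℕ} {L : Finset (Fin m)}

theorem mem_Δ {v : V m} : v ∈ Δ L ↔ ∀ i ∉ L, v i = 0 := by
  simp only [Δ, supp, mem_filter, mem_univ, true_and, subset_iff]
  exact forall_congr' fun i => by tauto

theorem zero_mem_Δ : (0 : V m) ∈ Δ L :=
  mem_Δ.2 fun _ _ => rfl

theorem add_mem_Δ {v w : V m} (hv : v ∈ Δ L) (hw : w ∈ Δ L) : v + w ∈ Δ L :=
  mem_Δ.2 fun i hi => by simp [mem_Δ.1 hv i hi, mem_Δ.1 hw i hi]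

theorem card_Δ (L : Finset (Fin m)) : #(Δ L) = 2 ^ #L := by
  have : Δ L = Fintype.piFinset fun i => if i ∈ L then univ else {0} := by
    ext v
    simp only [mem_Δ, Fintype.mem_piFinset]
    refine forall_congr' fun i => ?_
    split_ifs <;> simp_all
  rw [this, Fintype.card_piFinset]
  simp [apply_ite, prod_ite_mem]

theorem Δ_univ : Δ (univ : Finset (Fin m)) = univ := by
  ext v; simp [mem_Δ]

theorem Δ_empty : Δ (∅ : Finset (Fin m)) = {0} := by
  ext v; simp [mem_Δ, funext_iff]

theorem dot_eq_zero_of_mem_Δ_compl {a d : V m} (ha : a ∈ Δ Lᶜ) (hd : d ∈ Δ L) : dot a d = 0 :=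
  sum_eq_zero fun i _ => by
    by_cases hi : i ∈ L
    · simp [mem_Δ.1 ha i (by simpa)]
    · simp [mem_Δ.1 hd i hi]

theorem exists_dot_eq_one_of_notMem_Δ_compl {a : V m} (ha : a ∉ Δ Lᶜ) :
    ∃ d ∈ Δ L, dot a d = 1 := by
  obtain ⟨i, hi, hai⟩ : ∃ i ∈ L, a i ≠ 0 := by simpa [mem_Δ] using ha
  refine ⟨Pi.single i 1, mem_Δ.2 fun j hj => ?_, ?_⟩
  · simp [show j ≠ i by rintro rfl; exact hj hi]
  · change a ⬝ᵥ Pi.single i 1 = 1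
    rw [dotProduct_single, mul_one]
    revert hai; generalize a i = x; revert x; decide

end Δ

section triple

variable {m : ℕ}

def tripleDot (k : V m × V m × V m) : (V m × V m × V m) →+ ZMod 2 where
  toFun d := dot k.1 d.1 + dot k.2.1 d.2.1 + dot k.2.2 d.2.2
  map_zero' := by simp [dot]
  map_add' x y := by
    simp only [dot, Prod.fst_add, Prod.snd_add, Pi.add_apply, mul_add, sum_add_distrib]
    ring

theorem card_triple : Fintype.card (V m × V m × V m) = 2 ^ (3 * m) := by
  simp only [Fintype.card_prod, Fintype.card_fun, ZMod.card, Fintype.card_fin, ← pow_add]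
  ring_nf

variable (L M N : Finset (Fin m))

theorem zero_mem_prod_Δ : (0 : V m × V m × V m) ∈ Δ L ×ˢ Δ M ×ˢ Δ N :=
  mem_product.2 ⟨zero_mem_Δ, mem_product.2 ⟨zero_mem_Δ, zero_mem_Δ⟩⟩

theorem card_prod_Δ : #(Δ L ×ˢ Δ M ×ˢ Δ N) = 2 ^ (#L + #M + #N) := by
  rw [card_product, card_product, card_Δ, card_Δ, card_Δ, ← pow_add, ← pow_add, add_assoc]

theorem card_prod_Δ_compl : #(Δ Lᶜ ×ˢ Δ Mᶜ ×ˢ Δ Nᶜ) = 2 ^ (3 * m - (#L + #M + #N)) := by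
  have hL := card_le_univ L
  have hM := card_le_univ M
  have hN := card_le_univ N
  rw [card_prod_Δ, card_compl, card_compl, card_compl]
  simp only [Fintype.card_fin] at *
  congr 1
  omega

theorem card_filter_tripleDot_eq_one (k : V m × V m × V m) :
    #{d ∈ Δ L ×ˢ Δ M ×ˢ Δ N | tripleDot k d = 1} =
      if k ∈ Δ Lᶜ ×ˢ Δ Mᶜ ×ˢ Δ Nᶜ then 0 else 2 ^ (#L + #M + #N - 1) := by
  split_ifs with hk
  · refine card_eq_zero.2 (filter_eq_empty_iff.2 fun d hd => ?_)
    simp only [mem_product] at hk hd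
    simp [tripleDot, dot_eq_zero_of_mem_Δ_compl hk.1 hd.1,
      dot_eq_zero_of_mem_Δ_compl hk.2.1 hd.2.1, dot_eq_zero_of_mem_Δ_compl hk.2.2 hd.2.2]
  · obtain ⟨u, hu, hku⟩ : ∃ u ∈ Δ L ×ˢ Δ M ×ˢ Δ N, tripleDot k u = 1 := by
      simp only [mem_product, not_and_or] at hk
      rcases hk with hk | hk | hk <;> obtain ⟨d, hd, hkd⟩ := exists_dot_eq_one_of_notMem_Δ_compl hk
      · exact ⟨(d, 0, 0), by simp [hd, zero_mem_Δ], by simpa [tripleDot, dot] using hkd⟩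
      · exact ⟨(0, d, 0), by simp [hd, zero_mem_Δ], by simpa [tripleDot, dot] using hkd⟩
      · exact ⟨(0, 0, d), by simp [hd, zero_mem_Δ], by simpa [tripleDot, dot] using hkd⟩
    have h2 := two_mul_card_filter_eq_one (tripleDot k) (Δ L ×ˢ Δ M ×ˢ Δ N) hku fun w hw => by
      simp only [mem_product] at hu hw ⊢
      exact ⟨add_mem_Δ hw.1 hu.1, add_mem_Δ hw.2.1 hu.2.1, add_mem_Δ hw.2.2 hu.2.2⟩
    rw [card_prod_Δ] at h2
    generalize #L + #M + #N = s at h2 ⊢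
    cases s with
    | zero => omega
    | succ s =>
      rw [pow_succ'] at h2
      simpa using h2

theorem card_filter_tripleDot_eq_one_univ (k : V m × V m × V m) :
    #{d | tripleDot k d = 1} = if k = 0 then 0 else 2 ^ (3 * m - 1) := by
  have := card_filter_tripleDot_eq_one (univ : Finset (Fin m)) univ univ k
  simp only [Δ_univ, compl_univ, Δ_empty, univ_product_univ, card_univ, Fintype.card_fin] at this
  simpa [← Prod.zero_eq_mk, show m + m + m = 3 * m by ring] using this

end triple

section code

variable {m : ℕ}

theorem codeMapE_apply (E : Finset (V m × V m × V m)) (α β γ : V m) (d : {x // x ∈ E}) :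
    codeMapE E (α, β, γ) d = tripleDot (α, β + γ, β) d.1 := by
  simp [codeMapE, dotL, dot, tripleDot, LinearMap.smulRight]

theorem wtv_codeMapE (E : Finset (V m × V m × V m)) (α β γ : V m) :
    wtv (codeMapE E (α, β, γ)) = #{d ∈ E | tripleDot (α, β + γ, β) d = 1} := by
  have hc : codeMapE E (α, β, γ) = fun d : {x // x ∈ E} => tripleDot (α, β + γ, β) d.1 :=
    funext (codeMapE_apply E α β γ)
  rw [wtv, hc, univ_eq_attach, filter_attach (tripleDot (α, β + γ, β) · ≠ 0), card_map,
    card_attach]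
  congr! 2 with d
  generalize tripleDot (α, β + γ, β) d = x
  revert x; decide

def shear : (V m × V m × V m) ≃ (V m × V m × V m) where
  toFun k := (k.1, k.2.1 + k.2.2, k.2.1)
  invFun k := (k.1, k.2.2, k.2.1 - k.2.2)
  left_inv k := by simp
  right_inv k := by simp

theorem shear_zero : shear (0 : V m × V m × V m) = 0 := by
  simp [shear]

/-- The weight of the codeword of `shear.symm k`, read off from the position of `k` relative to
`Δ Lᶜ ×ˢ Δ Mᶜ ×ˢ Δ Nᶜ`, the annihilator of `Δ L ×ˢ Δ M ×ˢ Δ N`. -/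
def codeWeight (L M N : Finset (Fin m)) (k : V m × V m × V m) : ℕ :=
  if k = 0 then 0
  else if k ∈ Δ Lᶜ ×ˢ Δ Mᶜ ×ˢ Δ Nᶜ then 2 ^ (3 * m - 1)
  else 2 ^ (3 * m - 1) - 2 ^ (#L + #M + #N - 1)

theorem wtv_codeMapE_compl (L M N : Finset (Fin m)) (k : V m × V m × V m) :
    wtv (codeMapE (Δ L ×ˢ Δ M ×ˢ Δ N)ᶜ k) = codeWeight L M N (shear k) := by
  obtain ⟨α, β, γ⟩ := k
  rw [wtv_codeMapE, show shear (α, β, γ) = (α, β + γ, β) from rfl, codeWeight]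
  have := card_filter_add_card_filter_compl (Δ L ×ˢ Δ M ×ˢ Δ N) (tripleDot (α, β + γ, β) · = 1)
  rw [card_filter_tripleDot_eq_one, card_filter_tripleDot_eq_one_univ] at this
  generalize (α, β + γ, β) = k at this ⊢
  have h0 := zero_mem_prod_Δ Lᶜ Mᶜ Nᶜ
  split_ifs at this ⊢ <;> simp_all
  omega

variable {L M N : Finset (Fin m)}

theorem le_codeWeight {k : V m × V m × V m} (hk : k ≠ 0) :
    2 ^ (3 * m - 1) - 2 ^ (#L + #M + #N - 1) ≤ codeWeight L M N k := by
  rw [codeWeight, if_neg hk]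
  split_ifs
  exacts [Nat.sub_le _ _, le_rfl]

theorem codeWeight_of_notMem {k : V m × V m × V m} (hk : k ∉ Δ Lᶜ ×ˢ Δ Mᶜ ×ˢ Δ Nᶜ) :
    codeWeight L M N k = 2 ^ (3 * m - 1) - 2 ^ (#L + #M + #N - 1) := by
  have hk0 : k ≠ 0 := fun h => hk (h ▸ zero_mem_prod_Δ Lᶜ Mᶜ Nᶜ)
  simp [codeWeight, hk0, hk]

theorem sum_X_pow_codeWeight :
    ∑ k, (X : ℤ[X]) ^ codeWeight L M N k
      = 1 + C ((2 : ℤ) ^ (3 * m) - 2 ^ (3 * m - (#L + #M + #N)))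
              * X ^ (2 ^ (3 * m - 1) - 2 ^ (#L + #M + #N - 1))
          + C ((2 : ℤ) ^ (3 * m - (#L + #M + #N)) - 1) * X ^ (2 ^ (3 * m - 1)) := by
  set A := Δ Lᶜ ×ˢ Δ Mᶜ ×ˢ Δ Nᶜ
  have h0 : 0 ∈ A := zero_mem_prod_Δ Lᶜ Mᶜ Nᶜ
  rw [← sum_add_sum_compl A, ← add_sum_erase A _ h0]
  have hA : ∀ k ∈ A.erase 0, (X : ℤ[X]) ^ codeWeight L M N k = X ^ (2 ^ (3 * m - 1)) := by
    intro k hk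
    obtain ⟨hk0, hkA⟩ := mem_erase.1 hk
    rw [codeWeight, if_neg hk0, if_pos hkA]
  have hAc : ∀ k ∈ Aᶜ, (X : ℤ[X]) ^ codeWeight L M N k
      = X ^ (2 ^ (3 * m - 1) - 2 ^ (#L + #M + #N - 1)) :=
    fun k hk => by rw [codeWeight_of_notMem (mem_compl.1 hk)]
  have hcard : #A ≤ 2 ^ (3 * m) := card_triple (m := m) ▸ card_le_univ A
  have hpos : 1 ≤ #A := card_pos.2 ⟨0, h0⟩
  rw [sum_congr rfl hA, sum_congr rfl hAc, sum_const, sum_const, card_erase_of_mem h0, card_compl,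
    card_triple, nsmul_eq_mul, nsmul_eq_mul, Nat.cast_sub hcard, Nat.cast_sub hpos,
    card_prod_Δ_compl, codeWeight, if_pos rfl, pow_zero]
  simp only [map_sub, map_pow, map_one, map_ofNat, Nat.cast_pow, Nat.cast_ofNat, Nat.cast_one]
  ring

theorem card_add_card_add_card_lt (hne : ¬(L = univ ∧ M = univ ∧ N = univ)) :
    #L + #M + #N < 3 * m := by
  have bound (K : Finset (Fin m)) : #K ≤ m ∧ (K ≠ univ → #K < m) :=
    ⟨by simpa using card_le_univ K, fun hK => by simpa using card_lt_card (ssubset_univ_iff.2 hK)⟩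
  obtain ⟨hL, hL'⟩ := bound L
  obtain ⟨hM, hM'⟩ := bound M
  obtain ⟨hN, hN'⟩ := bound N
  by_contra h
  exact hne ⟨by_contra fun h' => by linarith [hL' h'], by_contra fun h' => by linarith [hM' h'],
    by_contra fun h' => by linarith [hN' h']⟩

theorem two_pow_card_sub_one_lt (hlt : #L + #M + #N < 3 * m) :
    2 ^ (#L + #M + #N - 1) < 2 ^ (3 * m - 1) :=
  Nat.pow_lt_pow_right one_lt_two (by omega)

theorem codeMapE_compl_injective (hlt : #L + #M + #N < 3 * m) :
    Function.Injective (codeMapE (Δ L ×ˢ Δ M ×ˢ Δ N)ᶜ) := by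
  rw [← LinearMap.ker_eq_bot, LinearMap.ker_eq_bot']
  intro k hk
  by_contra hk0
  have hwt := le_codeWeight (L := L) (M := M) (N := N) (shear_zero ▸ shear.injective.ne hk0)
  rw [← wtv_codeMapE_compl, hk, wtv_zero] at hwt
  have := two_pow_card_sub_one_lt hlt
  omega

end code

theorem sum_range_two_pow_rev (n : ℕ) : ∑ i ∈ range n, (2 : ℤ) ^ (n - 1 - i) = 2 ^ n - 1 := by
  rw [sum_range_reflect (2 ^ ·) n]
  simpa using geom_sum_mul (2 : ℤ) n

theorem sum_ceil_two_pow_sub_div (s n : ℕ) (hs : 1 ≤ s) (hsn : s ≤ n) :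
    ∑ i ∈ range n, ⌈((2 ^ (n - 1) - 2 ^ (s - 1) : ℚ)) / 2 ^ i⌉ = (2 ^ n - 2 ^ s : ℤ) := by
  have hterm : ∀ i ∈ range n, ⌈((2 ^ (n - 1) - 2 ^ (s - 1) : ℚ)) / 2 ^ i⌉
      = (2 ^ (n - 1 - i) : ℤ) - if i < s then 2 ^ (s - 1 - i) else 0 := by
    intro i hi
    have hin : i ≤ n - 1 := by rw [mem_range] at hi; omega
    have hdiv : ((2 ^ (n - 1) - 2 ^ (s - 1) : ℚ)) / 2 ^ i
        = 2 ^ (n - 1 - i) - 2 ^ (s - 1) / 2 ^ i := by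
      rw [sub_div, pow_sub₀ (2 : ℚ) two_ne_zero hin, div_eq_mul_inv]
    split_ifs with his
    · rw [hdiv, div_eq_mul_inv, ← pow_sub₀ (2 : ℚ) two_ne_zero (by omega : i ≤ s - 1)]
      exact_mod_cast Int.ceil_intCast _
    · rw [hdiv, sub_zero, Int.ceil_eq_iff]
      have hlt : (2 : ℚ) ^ (s - 1) < 2 ^ i := pow_lt_pow_right₀ one_lt_two (by omega)
      have hfrac : 0 < (2 : ℚ) ^ (s - 1) / 2 ^ i := by positivity
      have hfrac' : (2 : ℚ) ^ (s - 1) / 2 ^ i < 1 := (div_lt_one (by positivity)).2 hlt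
      push_cast
      constructor <;> linarith
  have hfirst : ∑ i ∈ range n, (if i < s then (2 : ℤ) ^ (s - 1 - i) else 0) = 2 ^ s - 1 := by
    rw [← sum_filter, show {i ∈ range n | i < s} = range s by ext; simp; omega,
      sum_range_two_pow_rev]
  rw [sum_congr rfl hterm, sum_sub_distrib, sum_range_two_pow_rev, hfirst]
  ring

theorem stmt13_general (m : ℕ) (L M N : Finset (Fin m))
    (hs : 1 ≤ L.card + M.card + N.card)
    (hne : ¬(L = Finset.univ ∧ M = Finset.univ ∧ N = Finset.univ)) :
    (Fintype.card {x // x ∈ (Δ L ×ˢ Δ M ×ˢ Δ N)ᶜ} = 2 ^ (3 * m) - 2 ^ (L.card + M.card + N.card)) ∧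
    (Module.finrank (ZMod 2) ↥(LinearMap.range (codeMapE (Δ L ×ˢ Δ M ×ˢ Δ N)ᶜ)) = 3 * m) ∧
    IsLeast {w : ℕ | ∃ c ∈ LinearMap.range (codeMapE (Δ L ×ˢ Δ M ×ˢ Δ N)ᶜ), c ≠ 0 ∧ wtv c = w} (2 ^ (3 * m - 1) - 2 ^ (L.card + M.card + N.card - 1)) ∧
    ((∑ c ∈ Finset.univ.filter (fun c => c ∈ LinearMap.range (codeMapE (Δ L ×ˢ Δ M ×ˢ Δ N)ᶜ)),
        (X : ℤ[X]) ^ wtv c)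
      = 1 + Polynomial.C ((2 : ℤ) ^ (3 * m) - 2 ^ (3 * m - (L.card + M.card + N.card))) * X ^ (2 ^ (3 * m - 1) - 2 ^ (L.card + M.card + N.card - 1))
          + Polynomial.C ((2 : ℤ) ^ (3 * m - (L.card + M.card + N.card)) - 1) * X ^ (2 ^ (3 * m - 1))) ∧
    (∑ i ∈ Finset.range (3 * m), ⌈((2 ^ (3 * m - 1) - 2 ^ (L.card + M.card + N.card - 1) : ℚ)) / 2 ^ i⌉ = (2 ^ (3 * m) - 2 ^ (L.card + M.card + N.card) : ℤ)) := by
  have hlt := card_add_card_add_card_lt hne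
  have hinj := codeMapE_compl_injective hlt
  refine ⟨?_, ?_, ⟨?_, ?_⟩, ?_, sum_ceil_two_pow_sub_div _ _ hs hlt.le⟩
  · rw [Fintype.card_coe, card_compl, card_triple, card_prod_Δ]
  · rw [LinearMap.finrank_range_of_inj hinj, Module.finrank_prod, Module.finrank_prod,
      Module.finrank_fintype_fun_eq_card, Fintype.card_fin]
    ring
  · obtain ⟨k, -, hk⟩ := exists_mem_notMem_of_card_lt_card (t := univ)
      (s := Δ Lᶜ ×ˢ Δ Mᶜ ×ˢ Δ Nᶜ) (by
        rw [card_prod_Δ_compl, card_univ, card_triple]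
        exact Nat.pow_lt_pow_right one_lt_two (by omega))
    have hwt : wtv (codeMapE (Δ L ×ˢ Δ M ×ˢ Δ N)ᶜ (shear.symm k))
        = 2 ^ (3 * m - 1) - 2 ^ (#L + #M + #N - 1) := by
      rw [wtv_codeMapE_compl, Equiv.apply_symm_apply, codeWeight_of_notMem hk]
    refine ⟨_, LinearMap.mem_range_self _ (shear.symm k), fun h0 => ?_, hwt⟩
    rw [h0, wtv_zero] at hwt
    have := two_pow_card_sub_one_lt hlt
    omega
  · rintro w ⟨_, ⟨k, rfl⟩, hk0, rfl⟩
    rw [wtv_codeMapE_compl]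
    exact le_codeWeight (shear_zero ▸ shear.injective.ne fun h => hk0 (h ▸ map_zero _))
  · rw [show univ.filter (· ∈ LinearMap.range (codeMapE (Δ L ×ˢ Δ M ×ˢ Δ N)ᶜ)) =
        univ.image (codeMapE (Δ L ×ˢ Δ M ×ˢ Δ N)ᶜ) by ext; simp,
      sum_image fun _ _ _ _ h => hinj h]
    simp only [wtv_codeMapE_compl]
    rw [Equiv.sum_comp shear fun k => (X : ℤ[X]) ^ codeWeight L M N k, sum_X_pow_codeWeight]

/-- Theorem 4.1(9): the code on the coordinate set
`E = (F₂^m)³ \ (Δ_L × Δ_M × Δ_N)` is a two-weight binary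
`[2^{3m} − 2^s, 3m, 2^{3m−1} − 2^{s−1}]` Griesmer code with the stated weight
distribution. -/
theorem stmt13 (m : ℕ) (hm : 1 ≤ m) (L M N : Finset (Fin m))
    (hs : 1 ≤ L.card + M.card + N.card)
    (hne : ¬(L = Finset.univ ∧ M = Finset.univ ∧ N = Finset.univ)) :
    (Fintype.card {x // x ∈ (Δ L ×ˢ Δ M ×ˢ Δ N)ᶜ} = 2 ^ (3 * m) - 2 ^ (L.card + M.card + N.card)) ∧
    (Module.finrank (ZMod 2) ↥(LinearMap.range (codeMapE (Δ L ×ˢ Δ M ×ˢ Δ N)ᶜ)) = 3 * m) ∧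
    IsLeast {w : ℕ | ∃ c ∈ LinearMap.range (codeMapE (Δ L ×ˢ Δ M ×ˢ Δ N)ᶜ), c ≠ 0 ∧ wtv c = w} (2 ^ (3 * m - 1) - 2 ^ (L.card + M.card + N.card - 1)) ∧
    ((∑ c ∈ Finset.univ.filter (fun c => c ∈ LinearMap.range (codeMapE (Δ L ×ˢ Δ M ×ˢ Δ N)ᶜ)),
        (X : ℤ[X]) ^ wtv c)
      = 1 + Polynomial.C ((2 : ℤ) ^ (3 * m) - 2 ^ (3 * m - (L.card + M.card + N.card))) * X ^ (2 ^ (3 * m - 1) - 2 ^ (L.card + M.card + N.card - 1))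
          + Polynomial.C ((2 : ℤ) ^ (3 * m - (L.card + M.card + N.card)) - 1) * X ^ (2 ^ (3 * m - 1))) ∧
    (∑ i ∈ Finset.range (3 * m), ⌈((2 ^ (3 * m - 1) - 2 ^ (L.card + M.card + N.card - 1) : ℚ)) / 2 ^ i⌉ = (2 ^ (3 * m) - 2 ^ (L.card + M.card + N.card) : ℤ)) :=
  stmt13_general m L M N hs hne
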